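/- arXiv:2201.04758 — 2 statements merged into one kernel-verified Lean document; each statement's English description precedes it below -/
import Mathlib

section
/- Let F : ℝ → ℂ be twice continuously differentiable with F′(0) = 0 and sup_{s ≥ 0} (|F(s)| + |F′(s)| + |F″(s)|) < ∞. Let g : ℝ → ℂ be measurable with ∫_ℝ (1+|y|)²|g(y)| dy < ∞ and ∫_ℝ g(y) dy = ∫_ℝ y·g(y) dy = 0. Then for every λ > 0 and every x ∈ ℝ, both integrals converge absolutely and ∫_ℝ F(λ|x−y|) g(y) dy = λ²·∫_ℝ ∫₀¹ (1−θ)·F″(λ|x−θy|)·y²·g(y) dθ dy. -/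
/-!
The function `G t = F (λ |t|)` is `C²` on all of `ℝ`: away from `0` this is the chain rule, and
at `0` the kink of `|t|` is invisible because `F'(0) = 0`, so `G' t = sgn t · λ F'(λ |t|)` is
continuous and again differentiable, with `G'' t = λ² F''(λ |t|)`. Taylor's formula with integral
remainder, `G (x - y) = G x - y G' x + y² ∫₀¹ (1 - θ) G''(x - θ y) dθ`, multiplied by `g y` and
integrated in `y`, loses its first two terms to the vanishing moments of `g`. Boundedness of `F`
and `F''` on `[0, ∞)` against the weight `(1 + |y|)²` gives all the absolute convergence.
-/

open MeasureTheory Set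

section Derivatives

variable {E : Type*} [NormedAddCommGroup E] [NormedSpace ℝ E]

theorem hasDerivAt_of_eqOn_Iic_of_eqOn_Ici {φ u v φ' : ℝ → E} {a : ℝ}
    (hu : ∀ t ≤ a, HasDerivAt u (φ' t) t) (hv : ∀ t ≥ a, HasDerivAt v (φ' t) t)
    (hφu : EqOn φ u (Iic a)) (hφv : EqOn φ v (Ici a)) (t : ℝ) : HasDerivAt φ (φ' t) t := by
  rcases lt_trichotomy t a with ht | rfl | ht
  · exact (hu t ht.le).congr_of_eventuallyEq <|
      (eventually_lt_nhds ht).mono fun s hs => hφu hs.le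
  · have h := ((hu t le_rfl).hasDerivWithinAt.congr hφu (hφu (mem_Iic.2 le_rfl))).union
      ((hv t le_rfl).hasDerivWithinAt.congr hφv (hφv (mem_Ici.2 le_rfl)))
    rwa [Iic_union_Ici, hasDerivWithinAt_univ] at h
  · exact (hv t ht.le).congr_of_eventuallyEq <|
      (eventually_gt_nhds ht).mono fun s hs => hφv hs.le

theorem hasDerivAt_comp_abs {f f' : ℝ → E} (hf : ∀ t ≥ 0, HasDerivAt f (f' t) t)
    (hf'0 : f' 0 = 0) (t : ℝ) :
    HasDerivAt (fun s => f |s|) (Real.sign t • f' |t|) t := by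
  refine hasDerivAt_of_eqOn_Iic_of_eqOn_Ici (a := 0) (u := fun s => f (-s)) (v := f)
    (φ' := fun t => Real.sign t • f' |t|)
    (fun t ht => ?_) (fun t ht => ?_) (fun s hs => ?_) (fun s hs => ?_) t
  · refine ((hf (-t) (neg_nonneg.2 ht)).scomp t (hasDerivAt_neg t)).congr_deriv ?_
    rcases ht.lt_or_eq with ht | rfl
    · simp [Real.sign_of_neg ht, abs_of_neg ht]
    · simp [hf'0]
  · rcases ht.lt_or_eq with ht | rfl
    · simpa [Real.sign_of_pos ht, abs_of_pos ht] using hf t ht.le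
    · simpa [hf'0] using hf 0 le_rfl
  · simp [abs_of_nonpos (show s ≤ 0 from hs)]
  · simp [abs_of_nonneg (show 0 ≤ s from hs)]

theorem hasDerivAt_sign_smul_comp_abs {f f' : ℝ → E} (hf : ∀ t ≥ 0, HasDerivAt f (f' t) t)
    (hf0 : f 0 = 0) (t : ℝ) :
    HasDerivAt (fun s => Real.sign s • f |s|) (f' |t|) t := by
  refine hasDerivAt_of_eqOn_Iic_of_eqOn_Ici (a := 0) (u := fun s => -f (-s)) (v := f)
    (φ' := fun t => f' |t|)
    (fun t ht => ?_) (fun t ht => ?_) (fun s hs => ?_) (fun s hs => ?_) t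
  · refine ((hf (-t) (neg_nonneg.2 ht)).scomp t (hasDerivAt_neg t)).neg.congr_deriv ?_
    simp [abs_of_nonpos ht]
  · simpa [abs_of_nonneg (show 0 ≤ t from ht)] using hf t ht
  · rcases (show s ≤ 0 from hs).lt_or_eq with hs | rfl
    · simp [Real.sign_of_neg hs, abs_of_neg hs]
    · simp [hf0]
  · rcases (show 0 ≤ s from hs).lt_or_eq with hs | rfl
    · simp [Real.sign_of_pos hs, abs_of_pos hs]
    · simp [hf0]

theorem hasDerivAt_comp_const_mul {F : ℝ → E} (hF : Differentiable ℝ F)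
    (l t : ℝ) : HasDerivAt (fun s => F (l * s)) (l • deriv F (l * t)) t := by
  have hl : HasDerivAt (fun s => l * s) l t := by simpa using (hasDerivAt_id t).const_mul l
  exact (hF (l * t)).hasDerivAt.scomp t hl

variable [CompleteSpace E]

theorem taylor_integral_remainder_two {G G' G'' : ℝ → E} (hG : ∀ t, HasDerivAt G (G' t) t)
    (hG' : ∀ t, HasDerivAt G' (G'' t) t) (hG'' : Continuous G'') (x y : ℝ) :
    G (x - y) = G x - y • G' x + ∫ θ in (0:ℝ)..1, ((1 - θ) * y ^ 2) • G'' (x - θ * y) := by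
  have hderiv : ∀ θ ∈ uIcc (0:ℝ) 1,
      HasDerivAt (fun θ => G (x - θ * y) - ((1 - θ) * y) • G' (x - θ * y))
        (((1 - θ) * y ^ 2) • G'' (x - θ * y)) θ := by
    intro θ _
    have hin : HasDerivAt (fun θ : ℝ => x - θ * y) (-y) θ := by
      simpa using ((hasDerivAt_id θ).mul_const y).const_sub x
    have hc : HasDerivAt (fun θ : ℝ => (1 - θ) * y) (-y) θ := by
      simpa using ((hasDerivAt_id θ).const_sub 1).mul_const y
    refine (((hG _).scomp θ hin).sub (hc.smul ((hG' _).scomp θ hin))).congr_deriv ?_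
    simp only [Function.comp_apply, smul_smul]
    module
  have hint : IntervalIntegrable (fun θ => ((1 - θ) * y ^ 2) • G'' (x - θ * y)) volume 0 1 :=
    Continuous.intervalIntegrable (by fun_prop) _ _
  rw [intervalIntegral.integral_eq_sub_of_hasDerivAt hderiv hint]
  simp

theorem taylor_comp_const_mul_abs {F : ℝ → E} (hF : ContDiff ℝ 2 F) (hF'0 : deriv F 0 = 0)
    (l x y : ℝ) :
    F (l * |x - y|) = F (l * |x|) - y • Real.sign x • l • deriv F (l * |x|) +
      ∫ θ in (0:ℝ)..1, ((1 - θ) * y ^ 2) • l • l • deriv (deriv F) (l * |x - θ * y|) := by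
  have hF1 : Differentiable ℝ F := hF.differentiable (by norm_num)
  have hF'1 : ContDiff ℝ 1 (deriv F) := hF.deriv'
  have hG := hasDerivAt_comp_abs (f := fun s => F (l * s))
    (fun t _ => hasDerivAt_comp_const_mul hF1 l t) (by simp [hF'0])
  have hG' := hasDerivAt_sign_smul_comp_abs (f := fun s => l • deriv F (l * s))
    (fun t _ => (hasDerivAt_comp_const_mul (hF'1.differentiable one_ne_zero) l t).const_smul l)
    (by simp [hF'0])
  exact taylor_integral_remainder_two hG hG' (by fun_prop) x y

theorem taylor_comp_const_mul_abs_mul {F : ℝ → ℂ} (hF : ContDiff ℝ 2 F) (hF'0 : deriv F 0 = 0)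
    (l x y : ℝ) (c : ℂ) :
    F (l * |x - y|) * c = F (l * |x|) * c + -(Real.sign x • l • deriv F (l * |x|)) * (y * c) +
      l ^ 2 * ∫ θ in (0:ℝ)..1,
        ((1 - θ : ℝ) : ℂ) * deriv (deriv F) (l * |x - θ * y|) * ((y : ℂ) ^ 2 * c) := by
  have hrem : (∫ θ in (0:ℝ)..1, ((1 - θ) * y ^ 2) • l • l • deriv (deriv F) (l * |x - θ * y|)) * c
      = l ^ 2 * ∫ θ in (0:ℝ)..1,
        ((1 - θ : ℝ) : ℂ) * deriv (deriv F) (l * |x - θ * y|) * ((y : ℂ) ^ 2 * c) := by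
    rw [← intervalIntegral.integral_mul_const, ← intervalIntegral.integral_const_mul]
    refine intervalIntegral.integral_congr fun θ _ => ?_
    simp only [Complex.real_smul]
    push_cast
    ring
  rw [taylor_comp_const_mul_abs hF hF'0]
  simp only [Complex.real_smul] at hrem ⊢
  linear_combination hrem

end Derivatives

section Integrability

theorem integrable_pow_mul_of_integrable_weight {μ : Measure ℝ} {g : ℝ → ℂ} {n k : ℕ}
    (hg : AEStronglyMeasurable g μ) (hw : Integrable (fun y : ℝ => (1 + |y|) ^ n * ‖g y‖) μ)
    (hk : k ≤ n) : Integrable (fun y : ℝ => (y : ℂ) ^ k * g y) μ := by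
  refine hw.mono' (by fun_prop) (ae_of_all _ fun y => ?_)
  have h1 : 1 ≤ 1 + |y| := le_add_of_nonneg_right (abs_nonneg y)
  rw [norm_mul, norm_pow, Complex.norm_real, Real.norm_eq_abs]
  gcongr
  calc |y| ^ k ≤ (1 + |y|) ^ k := by gcongr; linarith
    _ ≤ (1 + |y|) ^ n := pow_le_pow_right₀ h1 hk

theorem integrable_mul_comp_fst_prod_Icc {α : Type*} [MeasurableSpace α] {μ : Measure α}
    {B : α × ℝ → ℂ} {h : α → ℂ} {M a b : ℝ} (hh : Integrable h μ)
    (hB : AEStronglyMeasurable B (μ.prod (volume.restrict (Icc a b))))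
    (hBM : ∀ y, ∀ θ ∈ Icc a b, ‖B (y, θ)‖ ≤ M) :
    Integrable (fun p => B p * h p.1) (μ.prod (volume.restrict (Icc a b))) := by
  have hsnd : ∀ᵐ p ∂μ.prod (volume.restrict (Icc a b)), p.2 ∈ Icc a b :=
    (Measure.ae_prod_iff_ae_ae (measurableSet_Icc.preimage measurable_snd)).2 <|
      ae_of_all _ fun _ => ae_restrict_mem measurableSet_Icc
  exact (hh.comp_fst _).bdd_mul (c := M) hB <| hsnd.mono fun p hp => hBM p.1 p.2 hp

theorem MeasureTheory.Integrable.integrable_intervalIntegral_prod_Icc {α E : Type*}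
    [MeasurableSpace α] [NormedAddCommGroup E] [NormedSpace ℝ E] {μ : Measure α} [SFinite μ]
    {f : α × ℝ → E} {a b : ℝ}
    (hf : Integrable f (μ.prod (volume.restrict (Icc a b)))) (hab : a ≤ b) :
    Integrable (fun y => ∫ θ in a..b, f (y, θ)) μ :=
  hf.integral_prod_left.congr <| ae_of_all _ fun y => by
    dsimp only
    rw [integral_Icc_eq_integral_Ioc, ← intervalIntegral.integral_of_le hab]

theorem integral_eq_of_eq_add_moments {μ : Measure ℝ} {φ ψ g : ℝ → ℂ} {a b : ℂ}
    (hφ : ∀ y, φ y = a * g y + b * ((y : ℂ) * g y) + ψ y)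
    (hg : Integrable g μ) (hyg : Integrable (fun y : ℝ => (y : ℂ) * g y) μ)
    (hψ : Integrable ψ μ) (hg0 : ∫ y, g y ∂μ = 0) (hg1 : ∫ y, (y : ℂ) * g y ∂μ = 0) :
    ∫ y, φ y ∂μ = ∫ y, ψ y ∂μ := by
  rw [integral_congr_ae (ae_of_all _ hφ),
    integral_add (f := fun y => a * g y + b * ((y : ℂ) * g y))
      ((hg.const_mul a).add (hyg.const_mul b)) hψ,
    integral_add (hg.const_mul a) (hyg.const_mul b), integral_const_mul, integral_const_mul,
    hg0, hg1]
  simp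

end Integrability

/-- Order-two moment cancellation: if `g` has vanishing zeroth and first moments and
`F'(0) = 0`, then `∫ F(λ|x-y|) g(y) dy = λ² ∫∫ (1-θ) F''(λ|x-θy|) y² g(y) dθ dy`,
both integrals being absolutely convergent. -/
theorem stmt6 (F : ℝ → ℂ) (hF : ContDiff ℝ 2 F) (hF'0 : deriv F 0 = 0)
    (hbd : ∃ M : ℝ, ∀ s : ℝ, 0 ≤ s →
      ‖F s‖ + ‖deriv F s‖ + ‖deriv (deriv F) s‖ ≤ M)
    (g : ℝ → ℂ) (hgm : Measurable g)
    (hgint : Integrable (fun y : ℝ => (1 + |y|) ^ 2 * ‖g y‖))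
    (hg0 : ∫ y : ℝ, g y = 0)
    (hg1 : ∫ y : ℝ, (y : ℂ) * g y = 0)
    (l : ℝ) (hl : 0 < l) (x : ℝ) :
    Integrable (fun y : ℝ => F (l * |x - y|) * g y) ∧
    Integrable
      (fun p : ℝ × ℝ =>
        ((1 - p.2 : ℝ) : ℂ) * deriv (deriv F) (l * |x - p.2 * p.1|) * ((p.1 : ℂ) ^ 2 * g p.1))
      (volume.prod (volume.restrict (Set.Icc 0 1))) ∧
    ∫ y : ℝ, F (l * |x - y|) * g y =
      (l : ℂ) ^ 2 * ∫ y : ℝ, ∫ θ in (0:ℝ)..1,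
        ((1 - θ : ℝ) : ℂ) * deriv (deriv F) (l * |x - θ * y|) * ((y : ℂ) ^ 2 * g y) := by
  obtain ⟨M, hM⟩ := hbd
  have hFM (s : ℝ) (hs : 0 ≤ s) : ‖F s‖ ≤ M := by
    linarith [hM s hs, norm_nonneg (deriv F s), norm_nonneg (deriv (deriv F) s)]
  have hF''M (s : ℝ) (hs : 0 ≤ s) : ‖deriv (deriv F) s‖ ≤ M := by
    linarith [hM s hs, norm_nonneg (F s), norm_nonneg (deriv F s)]
  have hmoment {k : ℕ} (hk : k ≤ 2) : Integrable fun y : ℝ => (y : ℂ) ^ k * g y :=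
    integrable_pow_mul_of_integrable_weight hgm.aestronglyMeasurable hgint hk
  have hg : Integrable g := by simpa using hmoment (k := 0) (by norm_num)
  have hkernel := integrable_mul_comp_fst_prod_Icc (hmoment le_rfl) (a := 0) (b := 1)
    (B := fun p => ((1 - p.2 : ℝ) : ℂ) * deriv (deriv F) (l * |x - p.2 * p.1|))
    (by fun_prop) fun y θ hθ => by
      rw [norm_mul, Complex.norm_real, Real.norm_eq_abs, abs_of_nonneg (sub_nonneg.2 hθ.2)]
      exact (mul_le_of_le_one_left (norm_nonneg _) (by linarith [hθ.1])).trans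
        (hF''M _ (by positivity))
  refine ⟨hg.bdd_mul (c := M) (hF.continuous.comp (by fun_prop)).aestronglyMeasurable
    (ae_of_all _ fun y => hFM _ (by positivity)), hkernel, ?_⟩
  rw [← integral_const_mul]
  exact integral_eq_of_eq_add_moments (taylor_comp_const_mul_abs_mul hF hF'0 l x · (g _)) hg
    (by simpa using hmoment (k := 1) (by norm_num))
    ((hkernel.integrable_intervalIntegral_prod_Icc zero_le_one).const_mul _) hg0 hg1
end

section
/- Define g̃ : ℝ × ℝ → ℝ by g̃(x,y) = sgn(x)·sgn(y)·𝟙{| |x|−|y| | ≥ 2}·( (|x|+|y|)^{−1} − (|x|−|y|)^{−1} − 2|y|·(x²+y²)^{−1} ). Then for all x, b ∈ ℝ and all R > 0, |∫_{−R}^{R} g̃(x, y−b) dy| ≤ 4|b|. -/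
open MeasureTheory

/-!
Since `g̃(x, ·)` is odd, its integral over any symmetric interval vanishes. After the shift
`y ↦ y + b`, the interval `[-R - b, R - b]` is the symmetric interval `[-(R - b), R - b]` plus an
interval of length `2|b|`, on which `|g̃| ≤ 2`.
-/

@[fun_prop]
theorem Real.measurable_sign : Measurable Real.sign :=
  Measurable.ite (measurableSet_lt measurable_id measurable_const) measurable_const
    (Measurable.ite (measurableSet_lt measurable_const measurable_id) measurable_const
      measurable_const)

theorem Real.abs_sign_le_one (r : ℝ) : |Real.sign r| ≤ 1 := by
  rcases Real.sign_apply_eq r with h | h | h <;> simp [h]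

namespace intervalIntegral

variable {E : Type*} [NormedAddCommGroup E] [NormedSpace ℝ E] {f : ℝ → E}

theorem integral_symm_eq_zero_of_odd (hodd : ∀ y, f (-y) = -f y) (c : ℝ) :
    ∫ y in (-c)..c, f y = 0 := by
  have hneg := integral_comp_neg (a := -c) (b := c) f
  simp only [hodd, integral_neg, neg_neg] at hneg
  have htwo : (2 : ℝ) • ∫ y in (-c)..c, f y = 0 := by
    rw [two_smul]
    nth_rw 1 [← hneg]
    exact neg_add_cancel _
  exact (smul_eq_zero.mp htwo).resolve_left two_ne_zero

theorem norm_integral_comp_sub_right_le_of_odd {C : ℝ} (hodd : ∀ y, f (-y) = -f y)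
    (hf : AEStronglyMeasurable f) (hC : ∀ y, ‖f y‖ ≤ C) (R b : ℝ) :
    ‖∫ y in (-R)..R, f (y - b)‖ ≤ 2 * C * |b| := by
  have hint : ∀ s t : ℝ, IntervalIntegrable f volume s t := fun s t =>
    (intervalIntegrable_iff.mpr <|
      Measure.integrableOn_of_bounded measure_Ioc_lt_top.ne hf (.of_forall hC))
  calc ‖∫ y in (-R)..R, f (y - b)‖
      = ‖(∫ y in (-R - b)..(-(R - b)), f y) + ∫ y in (-(R - b))..(R - b), f y‖ := by
        rw [integral_comp_sub_right, integral_add_adjacent_intervals (hint _ _) (hint _ _)]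
    _ = ‖∫ y in (-R - b)..(-(R - b)), f y‖ := by
        rw [integral_symm_eq_zero_of_odd hodd, add_zero]
    _ ≤ C * |(-(R - b)) - (-R - b)| := norm_integral_le_of_norm_le_const fun y _ => hC y
    _ = 2 * C * |b| := by
        rw [show -(R - b) - (-R - b) = 2 * b by ring, abs_mul, abs_two]; ring

end intervalIntegral

theorem abs_inv_add_sub_inv_sub_sub_le_two {u v : ℝ} (hu : 0 ≤ u) (hv : 0 ≤ v)
    (h : 2 ≤ |u - v|) : |(u + v)⁻¹ - (u - v)⁻¹ - 2 * v / (u ^ 2 + v ^ 2)| ≤ 2 := by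
  have hsum : 2 ≤ u + v :=
    h.trans ((abs_sub _ _).trans (by rw [abs_of_nonneg hu, abs_of_nonneg hv]))
  have h₁ : |(u + v)⁻¹| ≤ 1 / 2 := by
    rw [abs_inv, abs_of_nonneg (by linarith), one_div]
    exact inv_anti₀ two_pos hsum
  have h₂ : |(u - v)⁻¹| ≤ 1 / 2 := by
    rw [abs_inv, one_div]
    exact inv_anti₀ two_pos h
  have hden : 0 < u ^ 2 + v ^ 2 := by
    nlinarith [mul_self_le_mul_self zero_le_two hsum, sq_nonneg (u - v)]
  have h₃ : |2 * v / (u ^ 2 + v ^ 2)| ≤ 1 := by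
    rw [abs_of_nonneg (by positivity), div_le_one hden]
    -- either `u ≥ v + 2`, or `v ≥ u + 2 ≥ 2` and then `2 v ≤ v ^ 2`
    rcases le_abs.mp h with h' | h' <;> nlinarith
  calc |(u + v)⁻¹ - (u - v)⁻¹ - 2 * v / (u ^ 2 + v ^ 2)|
      ≤ |(u + v)⁻¹| + |(u - v)⁻¹| + |2 * v / (u ^ 2 + v ^ 2)| :=
        (abs_sub _ _).trans (add_le_add_left (abs_sub _ _) _)
    _ ≤ 2 := by linarith

noncomputable def gTilde (x y : ℝ) : ℝ :=
  Real.sign x * Real.sign y *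
    (if 2 ≤ |(|x| - |y|)| then
        (|x| + |y|)⁻¹ - (|x| - |y|)⁻¹ - 2 * |y| / (x ^ 2 + y ^ 2)
      else 0)

theorem gTilde_neg_right (x y : ℝ) : gTilde x (-y) = -gTilde x y := by
  simp only [gTilde, abs_neg, Real.sign_neg, neg_sq]
  ring

theorem measurable_gTilde (x : ℝ) : Measurable (gTilde x) := by
  unfold gTilde
  exact Measurable.mul (by fun_prop)
    (.ite (measurableSet_le (by fun_prop) (by fun_prop)) (by fun_prop) (by fun_prop))

theorem abs_gTilde_le_two (x y : ℝ) : |gTilde x y| ≤ 2 := by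
  rw [gTilde, abs_mul, abs_mul]
  split_ifs with h
  · have hb := abs_inv_add_sub_inv_sub_sub_le_two (abs_nonneg x) (abs_nonneg y) h
    rw [sq_abs, sq_abs] at hb
    calc |Real.sign x| * |Real.sign y| * _ ≤ 1 * 1 * 2 := by
          gcongr
          exacts [Real.abs_sign_le_one x, Real.abs_sign_le_one y]
      _ = 2 := by norm_num
  · simp

/-- The odd-in-`y` cancellation estimate from Proposition "example_2": for
`g̃(x,y) = sgn x · sgn y · 𝟙{||x|-|y||≥2} (1/(|x|+|y|) - 1/(|x|-|y|) - 2|y|/(x²+y²))`,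
one has `|∫_{-R}^R g̃(x, y-b) dy| ≤ 4|b|`. -/
theorem stmt18 (g : ℝ → ℝ → ℝ)
    (hg : g = fun x y => Real.sign x * Real.sign y *
      (if 2 ≤ |(|x| - |y|)| then
          (|x| + |y|)⁻¹ - (|x| - |y|)⁻¹ - 2 * |y| / (x ^ 2 + y ^ 2)
        else 0)) :
    ∀ (x b : ℝ) (R : ℝ), 0 < R →
      |∫ y in (-R)..R, g x (y - b)| ≤ 4 * |b| := by
  intro x b R _
  have hg' : g = gTilde := hg
  subst hg'
  calc |∫ y in (-R)..R, gTilde x (y - b)| ≤ 2 * 2 * |b| :=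
        intervalIntegral.norm_integral_comp_sub_right_le_of_odd (gTilde_neg_right x)
          (measurable_gTilde x).aestronglyMeasurable (abs_gTilde_le_two x) R b
    _ = 4 * |b| := by ring
end
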